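/- arXiv:2010.13448 — 2 statements merged into one kernel-verified Lean document; each statement's English description precedes it below -/
import Mathlib

section
/- Let x(t) = Σ_{k=1}^K A_k(t) e^{2πiφ_k(t)} with each A_k ∈ L^∞, A_k > 0, satisfying |A_k(t+τ) - A_k(t)| ≤ ε₁|τ|A_k(t) for all t, τ, and each φ_k ∈ C² with |φ''_k(t)| ≤ ε₂ for all t. Let g ∈ L¹(ℝ) with I₁ = ∫|t g(t)|dt and I₂ = ∫|t² g(t)|dt finite, σ > 0, a > 0, μ ∈ ℝ. Then the remainder rem₀ = ∫ [x(b+at) - Σ_k A_k(b) e^{2πi(φ_k(b)+φ'_k(b)at)}] (1/σ) g(t/σ) e^{-2πiμt} dt satisfies |rem₀| ≤ M(b) a σ (ε₁ I₁ + π ε₂ I₂ a σ), where M(b) = Σ_k A_k(b). -/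
/-!
Pointwise in `t`, each component splits as
`(A(b+at) - A(b)) e^{2πiφ(b+at)} + A(b) (e^{2πiφ(b+at)} - e^{2πi(φ(b) + φ'(b)at)})`.
The first term is at most `ε₁ a |t| A(b)` by the amplitude bound; since `θ ↦ e^{2πiθ}` is
`2π`-Lipschitz, the second is at most `2π A(b)` times the first-order Taylor remainder of `φ`,
i.e. `π ε₂ a² t² A(b)`. Integrating against the dilated window `(1/σ) |g(t/σ)|` and substituting
`t = σu` turns `|t|` and `t²` into `σ |u|` and `σ² u²`, which gives the moments `I₁` and `I₂`.
-/

open MeasureTheory Set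

lemma abs_sub_sub_deriv_mul_le_of_abs_deriv_deriv_le {f : ℝ → ℝ} (hf : ContDiff ℝ 2 f)
    {ε : ℝ} (hε : ∀ t, |deriv (deriv f) t| ≤ ε) (x h : ℝ) :
    |f (x + h) - f x - deriv f x * h| ≤ ε * h ^ 2 / 2 := by
  rcases eq_or_ne h 0 with rfl | hh
  · simp
  have hx : x ≠ x + h := by simpa using hh
  obtain ⟨y, -, hy⟩ := taylor_mean_remainder_lagrange_iteratedDeriv (n := 1) hx hf.contDiffOn
  have htaylor : taylorWithinEval f 1 (uIcc x (x + h)) x (x + h) = f x + deriv f x * h := by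
    rw [taylorWithinEval_succ, taylor_within_zero_eval, iteratedDerivWithin_one,
      (hf.differentiable two_ne_zero x).derivWithin (uniqueDiffOn_uIcc hx x left_mem_uIcc)]
    simp [mul_comm]
  rw [sub_sub, ← htaylor, hy, iteratedDeriv_succ, iteratedDeriv_one, add_sub_cancel_left]
  simp only [Nat.reduceAdd, Nat.factorial_two, Nat.cast_ofNat, abs_div, abs_mul, abs_pow, sq_abs,
    abs_two]
  gcongr
  exact hε y

lemma norm_cexp_two_pi_I_mul_sub_le (r s : ℝ) :
    ‖Complex.exp (2 * Real.pi * Complex.I * r) - Complex.exp (2 * Real.pi * Complex.I * s)‖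
      ≤ 2 * Real.pi * |r - s| := by
  have hsplit : Complex.exp (2 * Real.pi * Complex.I * r) - Complex.exp (2 * Real.pi * Complex.I * s)
      = Complex.exp (2 * Real.pi * Complex.I * s)
        * (Complex.exp (Complex.I * (2 * Real.pi * (r - s) : ℝ)) - 1) := by
    rw [mul_sub, mul_one, ← Complex.exp_add]
    push_cast
    ring_nf
  have hunit : ‖Complex.exp (2 * Real.pi * Complex.I * s)‖ = 1 := by
    simp [Complex.norm_exp]
  calc _ = ‖Complex.exp (Complex.I * (2 * Real.pi * (r - s) : ℝ)) - 1‖ := by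
          rw [hsplit, norm_mul, hunit, one_mul]
    _ ≤ ‖2 * Real.pi * (r - s)‖ := Real.norm_exp_I_mul_ofReal_sub_one_le
    _ = 2 * Real.pi * |r - s| := by
          rw [Real.norm_eq_abs, abs_mul, abs_of_pos Real.two_pi_pos]

lemma norm_mul_cexp_sub_linear_phase_le {A φ : ℝ → ℝ} {ε₁ ε₂ : ℝ} {b : ℝ} (hA : 0 ≤ A b)
    (hAlip : ∀ τ, |A (b + τ) - A b| ≤ ε₁ * |τ| * A b) (hφ : ContDiff ℝ 2 φ)
    (hφ'' : ∀ t, |deriv (deriv φ) t| ≤ ε₂) (τ : ℝ) :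
    ‖(A (b + τ) : ℂ) * Complex.exp (2 * Real.pi * Complex.I * (φ (b + τ) : ℝ))
        - (A b : ℂ) * Complex.exp (2 * Real.pi * Complex.I * (φ b + deriv φ b * τ : ℝ))‖
      ≤ A b * (ε₁ * |τ| + Real.pi * ε₂ * τ ^ 2) := by
  set e₁ := Complex.exp (2 * Real.pi * Complex.I * (φ (b + τ) : ℝ))
  set e₂ := Complex.exp (2 * Real.pi * Complex.I * (φ b + deriv φ b * τ : ℝ))
  have he₁ : ‖e₁‖ = 1 := by simp [e₁, Complex.norm_exp]
  have hphase : ‖e₁ - e₂‖ ≤ Real.pi * ε₂ * τ ^ 2 := by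
    have htaylor := abs_sub_sub_deriv_mul_le_of_abs_deriv_deriv_le hφ hφ'' b τ
    rw [sub_sub] at htaylor
    calc ‖e₁ - e₂‖ ≤ 2 * Real.pi * |φ (b + τ) - (φ b + deriv φ b * τ)| :=
          norm_cexp_two_pi_I_mul_sub_le _ _
      _ ≤ 2 * Real.pi * (ε₂ * τ ^ 2 / 2) := by gcongr
      _ = Real.pi * ε₂ * τ ^ 2 := by ring
  calc _ = ‖((A (b + τ) - A b : ℝ) : ℂ) * e₁ + (A b : ℂ) * (e₁ - e₂)‖ := by
          push_cast; ring_nf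
    _ ≤ |A (b + τ) - A b| * 1 + A b * (Real.pi * ε₂ * τ ^ 2) := by
          grw [norm_add_le, norm_mul, norm_mul, he₁, Complex.norm_real, Complex.norm_real,
            Real.norm_eq_abs, Real.norm_of_nonneg hA, hphase]
    _ ≤ ε₁ * |τ| * A b * 1 + A b * (Real.pi * ε₂ * τ ^ 2) := by grw [hAlip τ]
    _ = A b * (ε₁ * |τ| + Real.pi * ε₂ * τ ^ 2) := by ring

lemma norm_sum_mul_cexp_sub_linear_phase_le {ι : Type*} (s : Finset ι) {A φ : ι → ℝ → ℝ}
    {ε₁ ε₂ : ℝ} {b : ℝ} (hA : ∀ k, 0 ≤ A k b)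
    (hAlip : ∀ k τ, |A k (b + τ) - A k b| ≤ ε₁ * |τ| * A k b) (hφ : ∀ k, ContDiff ℝ 2 (φ k))
    (hφ'' : ∀ k t, |deriv (deriv (φ k)) t| ≤ ε₂) (τ : ℝ) :
    ‖∑ k ∈ s, (A k (b + τ) : ℂ) * Complex.exp (2 * Real.pi * Complex.I * (φ k (b + τ) : ℝ))
        - ∑ k ∈ s, (A k b : ℂ) * Complex.exp (2 * Real.pi * Complex.I * (φ k b + deriv (φ k) b * τ : ℝ))‖
      ≤ (∑ k ∈ s, A k b) * (ε₁ * |τ| + Real.pi * ε₂ * τ ^ 2) := by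
  rw [← Finset.sum_sub_distrib, Finset.sum_mul]
  exact (norm_sum_le _ _).trans <| Finset.sum_le_sum fun k _ =>
    norm_mul_cexp_sub_linear_phase_le (hA k) (hAlip k) (hφ k) (hφ'' k) τ

lemma norm_integral_mul_dilated_window_le {f : ℝ → ℂ} {g : ℝ → ℝ} {σ c₁ c₂ : ℝ} (μ : ℝ)
    (hσ : 0 < σ) (hg1 : Integrable (fun t => t * g t)) (hg2 : Integrable (fun t => t ^ 2 * g t))
    (hf : ∀ t, ‖f t‖ ≤ c₁ * |t| + c₂ * t ^ 2) :
    ‖∫ t : ℝ, f t * ((1 / σ : ℝ) : ℂ) * (g (t / σ) : ℂ)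
        * Complex.exp (-(2 * Real.pi * Complex.I * (μ * t)))‖
      ≤ σ * (c₁ * (∫ t : ℝ, |t * g t|) + c₂ * σ * (∫ t : ℝ, |t ^ 2 * g t|)) := by
  set F : ℝ → ℝ := fun u => c₁ * |u * g u| + c₂ * σ * |u ^ 2 * g u|
  have hF1 : Integrable fun u => c₁ * |u * g u| := hg1.abs.const_mul c₁
  have hF2 : Integrable fun u => c₂ * σ * |u ^ 2 * g u| := hg2.abs.const_mul (c₂ * σ)
  have hpoint : ∀ t : ℝ, ‖f t * ((1 / σ : ℝ) : ℂ) * (g (t / σ) : ℂ)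
      * Complex.exp (-(2 * Real.pi * Complex.I * (μ * t)))‖ ≤ F (t / σ) := by
    intro t
    have hchirp : ‖Complex.exp (-(2 * Real.pi * Complex.I * (μ * t)))‖ = 1 := by
      simp [Complex.norm_exp]
    have hF_eq : F (t / σ) = (c₁ * |t| + c₂ * t ^ 2) * (1 / σ) * |g (t / σ)| := by
      simp only [F, abs_mul, abs_pow, abs_div, abs_of_pos hσ, sq_abs]
      field_simp
    rw [norm_mul, norm_mul, norm_mul, hchirp, mul_one, Complex.norm_real, Complex.norm_real,
      Real.norm_of_nonneg (by positivity), Real.norm_eq_abs, hF_eq]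
    gcongr
    exact hf t
  calc _ ≤ ∫ t : ℝ, F (t / σ) :=
        norm_integral_le_of_norm_le ((hF1.add hF2).comp_div hσ.ne') (ae_of_all _ hpoint)
    _ = σ * ∫ u : ℝ, F u := by rw [Measure.integral_comp_div, abs_of_pos hσ, smul_eq_mul]
    _ = _ := by rw [integral_add hF1 hF2, integral_const_mul, integral_const_mul]

theorem rem0_bound_sinusoidal_model_general (K : ℕ) (A : Fin K → ℝ → ℝ) (φ : Fin K → ℝ → ℝ)
    (g : ℝ → ℝ) (ε₁ ε₂ σ a b μ : ℝ) (hσ : 0 < σ) (ha : 0 < a)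
    (hApos : ∀ k t, 0 < A k t)
    (hAlip : ∀ k t τ, |A k (t + τ) - A k t| ≤ ε₁ * |τ| * A k t)
    (hφ : ∀ k, ContDiff ℝ 2 (φ k))
    (hφ'' : ∀ k t, |deriv (deriv (φ k)) t| ≤ ε₂)
    (hg1 : Integrable (fun t => t * g t))
    (hg2 : Integrable (fun t => t ^ 2 * g t)) :
    ‖(∫ t : ℝ,
        ((∑ k, (A k (b + a * t) : ℂ) * Complex.exp (2 * Real.pi * Complex.I * (φ k (b + a * t) : ℝ)))
          - ∑ k, (A k b : ℂ) * Complex.exp (2 * Real.pi * Complex.I *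
              ((φ k b : ℝ) + deriv (φ k) b * (a * t))))
        * ((1 / σ : ℝ) : ℂ) * (g (t / σ) : ℂ) * Complex.exp (-(2 * Real.pi * Complex.I * (μ * t))))‖
      ≤ (∑ k, A k b) * (a * σ) *
          (ε₁ * (∫ t : ℝ, |t * g t|) + Real.pi * ε₂ * (∫ t : ℝ, |t ^ 2 * g t|) * (a * σ)) := by
  set M := ∑ k, A k b
  have hmodel : ∀ t : ℝ,
      ‖(∑ k, (A k (b + a * t) : ℂ) * Complex.exp (2 * Real.pi * Complex.I * (φ k (b + a * t) : ℝ)))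
        - ∑ k, (A k b : ℂ) * Complex.exp (2 * Real.pi * Complex.I *
            ((φ k b : ℝ) + deriv (φ k) b * (a * t)))‖
      ≤ M * ε₁ * a * |t| + M * Real.pi * ε₂ * a ^ 2 * t ^ 2 := by
    intro t
    have h := norm_sum_mul_cexp_sub_linear_phase_le Finset.univ (fun k => (hApos k b).le)
      (fun k => hAlip k b) hφ hφ'' (a * t)
    push_cast at h
    calc _ ≤ M * (ε₁ * |a * t| + Real.pi * ε₂ * (a * t) ^ 2) := h
      _ = _ := by rw [abs_mul, abs_of_pos ha]; ring
  calc _ ≤ σ * (M * ε₁ * a * (∫ t : ℝ, |t * g t|) + M * Real.pi * ε₂ * a ^ 2 * σ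
          * (∫ t : ℝ, |t ^ 2 * g t|)) := norm_integral_mul_dilated_window_le μ hσ hg1 hg2 hmodel
    _ = _ := by ring

theorem rem0_bound_sinusoidal_model (K : ℕ) (A : Fin K → ℝ → ℝ) (φ : Fin K → ℝ → ℝ)
    (g : ℝ → ℝ) (ε₁ ε₂ σ a b μ : ℝ) (hσ : 0 < σ) (ha : 0 < a)
    (hAbd : ∀ k, MeasureTheory.MemLp (A k) ⊤)
    (hApos : ∀ k t, 0 < A k t)
    (hAlip : ∀ k t τ, |A k (t + τ) - A k t| ≤ ε₁ * |τ| * A k t)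
    (hφ : ∀ k, ContDiff ℝ 2 (φ k))
    (hφ'' : ∀ k t, |deriv (deriv (φ k)) t| ≤ ε₂)
    (hg : Integrable g)
    (hg1 : Integrable (fun t => t * g t))
    (hg2 : Integrable (fun t => t ^ 2 * g t)) :
    ‖(∫ t : ℝ,
        ((∑ k, (A k (b + a * t) : ℂ) * Complex.exp (2 * Real.pi * Complex.I * (φ k (b + a * t) : ℝ)))
          - ∑ k, (A k b : ℂ) * Complex.exp (2 * Real.pi * Complex.I *
              ((φ k b : ℝ) + deriv (φ k) b * (a * t))))
        * ((1 / σ : ℝ) : ℂ) * (g (t / σ) : ℂ) * Complex.exp (-(2 * Real.pi * Complex.I * (μ * t))))‖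
      ≤ (∑ k, A k b) * (a * σ) *
          (ε₁ * (∫ t : ℝ, |t * g t|) + Real.pi * ε₂ * (∫ t : ℝ, |t ^ 2 * g t|) * (a * σ)) :=
  rem0_bound_sinusoidal_model_general K A φ g ε₁ ε₂ σ a b μ hσ ha hApos hAlip hφ hφ'' hg1 hg2
end

section
/- Let x(t) = Σ_{k=1}^K A_k(t) e^{2πiφ_k(t)} with each A_k ∈ L^∞, A_k > 0, satisfying |A_k(t+τ) - A_k(t)| ≤ ε₁|τ|A_k(t), and each φ_k ∈ C³ with |φ'''_k(t)| ≤ ε₃ for all t. Let g ∈ L¹(ℝ) with I₁ = ∫|t g(t)|dt and I₃ = ∫|t³ g(t)|dt finite, σ > 0, a > 0. Then the remainder res₀ = ∫ [x(b+at) - Σ_k A_k(b) e^{2πi(φ_k(b)+φ'_k(b)at + (1/2)φ''_k(b)a²t²)}] (1/σ) g(t/σ) e^{-2πiμt} dt satisfies |res₀| ≤ M(b)(ε₁ I₁ a σ + (π/3) ε₃ I₃ a³ σ³), where M(b) = Σ_k A_k(b). -/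
/-!
Each component differs from its linear chirp approximation by an amplitude error, at most
`ε₁ |a t| A_k(b)`, plus `A_k(b)` times the phase error. Since `θ ↦ e^{2πiθ}` is `2π`-Lipschitz
and the Lagrange remainder of the second-order Taylor polynomial of `φ_k` is at most
`ε₃ |a t|³ / 6`, the latter contributes `(π/3) ε₃ |a t|³ A_k(b)`. Integrating this pointwise
bound against `|g(t/σ)|/σ` and substituting `t = σ s` turns `|t|` and `|t|³` into `σ I₁` and `σ³ I₃`.
-/

open MeasureTheory

theorem taylorWithinEval_two_eq {f : ℝ → ℝ} (hf : ContDiff ℝ 2 f) {s : Set ℝ}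
    (hs : UniqueDiffOn ℝ s) {x₀ : ℝ} (hx₀ : x₀ ∈ s) (x : ℝ) :
    taylorWithinEval f 2 s x₀ x
      = f x₀ + deriv f x₀ * (x - x₀) + 1 / 2 * deriv (deriv f) x₀ * (x - x₀) ^ 2 := by
  have hderiv (k : ℕ) (hk : k ≤ 2) : iteratedDerivWithin k f s x₀ = iteratedDeriv k f x₀ :=
    iteratedDerivWithin_eq_iteratedDeriv hs ((hf.of_le (by exact_mod_cast hk)).contDiffAt) hx₀
  simp only [taylor_within_apply, Finset.sum_range_succ, Finset.sum_range_zero,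
    hderiv 0 (by norm_num), hderiv 1 (by norm_num), hderiv 2 (by norm_num),
    iteratedDeriv_succ, iteratedDeriv_zero, smul_eq_mul]
  norm_num
  ring

theorem abs_sub_taylor_two_le {f : ℝ → ℝ} (hf : ContDiff ℝ 3 f) {C : ℝ}
    (hC : ∀ t, |deriv (deriv (deriv f)) t| ≤ C) (x₀ d : ℝ) :
    |f (x₀ + d) - (f x₀ + deriv f x₀ * d + 1 / 2 * deriv (deriv f) x₀ * d ^ 2)|
      ≤ C * |d| ^ 3 / 6 := by
  rcases eq_or_ne d 0 with rfl | hd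
  · simp
  have hx : x₀ ≠ x₀ + d := by simpa using hd
  obtain ⟨y, -, hy⟩ := taylor_mean_remainder_lagrange_iteratedDeriv hx hf.contDiffOn
  rw [taylorWithinEval_two_eq (hf.of_le (by norm_num)) (uniqueDiffOn_uIcc hx) Set.left_mem_uIcc,
    add_sub_cancel_left] at hy
  simp only [iteratedDeriv_succ, iteratedDeriv_zero] at hy
  rw [hy, abs_div, abs_mul, abs_pow]
  norm_num [Nat.factorial]
  gcongr
  exact hC y

theorem norm_exp_two_pi_I_sub_le (θ η : ℝ) :
    ‖Complex.exp (2 * Real.pi * Complex.I * θ) - Complex.exp (2 * Real.pi * Complex.I * η)‖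
      ≤ 2 * Real.pi * |θ - η| := by
  have h : Complex.exp (2 * Real.pi * Complex.I * θ) - Complex.exp (2 * Real.pi * Complex.I * η)
      = Complex.exp (2 * Real.pi * Complex.I * η)
        * (Complex.exp (Complex.I * ((2 * Real.pi * (θ - η) : ℝ) : ℂ)) - 1) := by
    rw [mul_sub, ← Complex.exp_add]; push_cast; ring_nf
  have hunit : ‖Complex.exp (2 * Real.pi * Complex.I * η)‖ = 1 := by
    rw [Complex.norm_exp]; simp
  rw [h, norm_mul, hunit, one_mul]
  refine Real.norm_exp_I_mul_ofReal_sub_one_le.trans_eq ?_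
  rw [Real.norm_eq_abs, abs_mul, abs_of_pos Real.two_pi_pos]

theorem norm_ofReal_mul_exp_sub_le (A₁ A₀ θ₁ θ₀ : ℝ) (hA₀ : 0 ≤ A₀) :
    ‖(A₁ : ℂ) * Complex.exp (2 * Real.pi * Complex.I * θ₁)
        - (A₀ : ℂ) * Complex.exp (2 * Real.pi * Complex.I * θ₀)‖
      ≤ |A₁ - A₀| + A₀ * (2 * Real.pi * |θ₁ - θ₀|) := by
  have hsplit : (A₁ : ℂ) * Complex.exp (2 * Real.pi * Complex.I * θ₁)
        - (A₀ : ℂ) * Complex.exp (2 * Real.pi * Complex.I * θ₀)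
      = ((A₁ - A₀ : ℝ) : ℂ) * Complex.exp (2 * Real.pi * Complex.I * θ₁)
        + (A₀ : ℂ) * (Complex.exp (2 * Real.pi * Complex.I * θ₁)
          - Complex.exp (2 * Real.pi * Complex.I * θ₀)) := by
    push_cast; ring
  have hunit : ‖Complex.exp (2 * Real.pi * Complex.I * θ₁)‖ = 1 := by
    rw [Complex.norm_exp]; simp
  rw [hsplit]
  refine (norm_add_le _ _).trans ?_
  rw [norm_mul, norm_mul, hunit, mul_one, Complex.norm_real, Complex.norm_real,
    Real.norm_eq_abs, Real.norm_eq_abs, abs_of_nonneg hA₀]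
  gcongr
  exact norm_exp_two_pi_I_sub_le θ₁ θ₀

theorem norm_sub_chirp_approx_le {A φ : ℝ → ℝ} {ε₁ ε₃ b d : ℝ} (hA₀ : 0 ≤ A b)
    (hA : |A (b + d) - A b| ≤ ε₁ * |d| * A b) (hφ : ContDiff ℝ 3 φ)
    (hφ''' : ∀ t, |deriv (deriv (deriv φ)) t| ≤ ε₃) :
    ‖(A (b + d) : ℂ) * Complex.exp (2 * Real.pi * Complex.I * φ (b + d))
        - (A b : ℂ) * Complex.exp (2 * Real.pi * Complex.I *
            (φ b + deriv φ b * d + 1 / 2 * deriv (deriv φ) b * d ^ 2 : ℝ))‖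
      ≤ A b * (ε₁ * |d| + Real.pi / 3 * ε₃ * |d| ^ 3) := by
  refine (norm_ofReal_mul_exp_sub_le _ _ _ _ hA₀).trans ?_
  have hT := abs_sub_taylor_two_le hφ hφ''' b d
  calc |A (b + d) - A b| + A b * (2 * Real.pi * |φ (b + d)
          - (φ b + deriv φ b * d + 1 / 2 * deriv (deriv φ) b * d ^ 2)|)
      ≤ ε₁ * |d| * A b + A b * (2 * Real.pi * (ε₃ * |d| ^ 3 / 6)) := by gcongr
    _ = A b * (ε₁ * |d| + Real.pi / 3 * ε₃ * |d| ^ 3) := by ring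

theorem integrable_and_integral_moment_weight {g : ℝ → ℝ} {σ : ℝ} (hσ : 0 < σ)
    (hg1 : Integrable fun t => t * g t) (hg3 : Integrable fun t => t ^ 3 * g t) (c₁ c₃ : ℝ) :
    Integrable (fun t => (c₁ * |t| + c₃ * |t| ^ 3) * (1 / σ * |g (t / σ)|)) ∧
      ∫ t, (c₁ * |t| + c₃ * |t| ^ 3) * (1 / σ * |g (t / σ)|)
        = c₁ * σ * (∫ t, |t * g t|) + c₃ * σ ^ 3 * ∫ t, |t ^ 3 * g t| := by
  have hw : (fun t => (c₁ * |t| + c₃ * |t| ^ 3) * (1 / σ * |g (t / σ)|))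
      = fun t => c₁ * |t / σ * g (t / σ)| + c₃ * σ ^ 2 * |(t / σ) ^ 3 * g (t / σ)| := by
    funext t
    rw [abs_mul, abs_mul, abs_pow, abs_div, abs_of_pos hσ]
    field_simp
  have hi1 := (hg1.abs.comp_div hσ.ne').const_mul c₁
  have hi3 := (hg3.abs.comp_div hσ.ne').const_mul (c₃ * σ ^ 2)
  rw [hw]
  refine ⟨hi1.add hi3, ?_⟩
  rw [integral_add hi1 hi3, integral_const_mul, integral_const_mul,
    Measure.integral_comp_div (fun s => |s * g s|),
    Measure.integral_comp_div (fun s => |s ^ 3 * g s|),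
    smul_eq_mul, smul_eq_mul, abs_of_pos hσ]
  ring

theorem res0_bound_chirp_model_general (K : ℕ) (A : Fin K → ℝ → ℝ) (φ : Fin K → ℝ → ℝ)
    (g : ℝ → ℝ) (ε₁ ε₃ σ a b μ : ℝ) (hσ : 0 < σ) (ha : 0 < a)
    (hApos : ∀ k t, 0 < A k t)
    (hAlip : ∀ k t τ, |A k (t + τ) - A k t| ≤ ε₁ * |τ| * A k t)
    (hφ : ∀ k, ContDiff ℝ 3 (φ k))
    (hφ''' : ∀ k t, |deriv (deriv (deriv (φ k))) t| ≤ ε₃)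
    (hg1 : Integrable (fun t => t * g t))
    (hg3 : Integrable (fun t => t ^ 3 * g t)) :
    ‖(∫ t : ℝ,
        ((∑ k, (A k (b + a * t) : ℂ) * Complex.exp (2 * Real.pi * Complex.I * (φ k (b + a * t) : ℝ)))
          - ∑ k, (A k b : ℂ) * Complex.exp (2 * Real.pi * Complex.I *
              ((φ k b : ℝ) + deriv (φ k) b * (a * t)
                + (1 / 2) * deriv (deriv (φ k)) b * (a * t) ^ 2)))
        * ((1 / σ : ℝ) : ℂ) * (g (t / σ) : ℂ) * Complex.exp (-(2 * Real.pi * Complex.I * (μ * t))))‖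
      ≤ (∑ k, A k b) *
          (ε₁ * (∫ t : ℝ, |t * g t|) * (a * σ)
            + (Real.pi / 3) * ε₃ * (∫ t : ℝ, |t ^ 3 * g t|) * (a * σ) ^ 3) := by
  obtain ⟨hint, hval⟩ :=
    integrable_and_integral_moment_weight hσ hg1 hg3 (ε₁ * a) (Real.pi / 3 * ε₃ * a ^ 3)
  refine (norm_integral_le_of_norm_le (hint.const_mul (∑ k, A k b))
    (ae_of_all _ fun t => ?_)).trans_eq ?_
  · have hkernel : ‖((1 / σ : ℝ) : ℂ) * (g (t / σ) : ℂ)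
        * Complex.exp (-(2 * Real.pi * Complex.I * (μ * t)))‖ = 1 / σ * |g (t / σ)| := by
      rw [norm_mul, norm_mul, Complex.norm_exp, Complex.norm_real, Complex.norm_real,
        Real.norm_eq_abs, Real.norm_eq_abs, abs_of_pos (one_div_pos.mpr hσ)]
      simp
    rw [mul_assoc, mul_assoc, norm_mul, ← mul_assoc ((1 / σ : ℝ) : ℂ), hkernel,
      ← mul_assoc (∑ k, A k b)]
    refine mul_le_mul_of_nonneg_right ?_ (by positivity)
    rw [← Finset.sum_sub_distrib, Finset.sum_mul]
    refine (norm_sum_le _ _).trans (Finset.sum_le_sum fun k _ => ?_)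
    have h := norm_sub_chirp_approx_le (hApos k b).le (hAlip k b (a * t)) (hφ k) (hφ''' k)
    push_cast at h
    rw [abs_mul, abs_of_pos ha] at h
    exact h.trans_eq (by ring)
  · rw [integral_const_mul, hval]
    ring

theorem res0_bound_chirp_model (K : ℕ) (A : Fin K → ℝ → ℝ) (φ : Fin K → ℝ → ℝ)
    (g : ℝ → ℝ) (ε₁ ε₃ σ a b μ : ℝ) (hσ : 0 < σ) (ha : 0 < a)
    (hAbd : ∀ k, MeasureTheory.MemLp (A k) ⊤)
    (hApos : ∀ k t, 0 < A k t)
    (hAlip : ∀ k t τ, |A k (t + τ) - A k t| ≤ ε₁ * |τ| * A k t)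
    (hφ : ∀ k, ContDiff ℝ 3 (φ k))
    (hφ''' : ∀ k t, |deriv (deriv (deriv (φ k))) t| ≤ ε₃)
    (hg : Integrable g)
    (hg1 : Integrable (fun t => t * g t))
    (hg3 : Integrable (fun t => t ^ 3 * g t)) :
    ‖(∫ t : ℝ,
        ((∑ k, (A k (b + a * t) : ℂ) * Complex.exp (2 * Real.pi * Complex.I * (φ k (b + a * t) : ℝ)))
          - ∑ k, (A k b : ℂ) * Complex.exp (2 * Real.pi * Complex.I *
              ((φ k b : ℝ) + deriv (φ k) b * (a * t)
                + (1 / 2) * deriv (deriv (φ k)) b * (a * t) ^ 2)))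
        * ((1 / σ : ℝ) : ℂ) * (g (t / σ) : ℂ) * Complex.exp (-(2 * Real.pi * Complex.I * (μ * t))))‖
      ≤ (∑ k, A k b) *
          (ε₁ * (∫ t : ℝ, |t * g t|) * (a * σ)
            + (Real.pi / 3) * ε₃ * (∫ t : ℝ, |t ^ 3 * g t|) * (a * σ) ^ 3) :=
  res0_bound_chirp_model_general K A φ g ε₁ ε₃ σ a b μ hσ ha hApos hAlip hφ hφ''' hg1 hg3
end
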